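/- arXiv:1111.6328 — 5 statements merged into one kernel-verified Lean document; each statement's English description precedes it below -/
import Mathlib

section
/- Let A be a unital algebra with automorphism σ, let J = qA ⊂ A ∗_ℂ A with σ extended by σ(q(a)) = q(σ(a)), and let n be an even integer. Suppose T is a linear functional on J^n satisfying T(xy) = T(σ(y)x) for all x ∈ J^k, y ∈ J^l with k + l = n (where J^0 = A ∗_ℂ A). Then τ(a₀,…,aₙ) := T(q(a₀)q(a₁)⋯q(aₙ)) is σ-invariant: τ(σ(a₀),…,σ(aₙ)) = τ(a₀,…,aₙ). -/
/-- `q(a) := ι(a) − ῑ(a)` for two algebra maps (e.g. the canonical inclusions into the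
free product `A ∗_ℂ A`). -/
def qMap {A B : Type*} [Ring A] [Algebra ℂ A] [Ring B] [Algebra ℂ B]
    (ι ι' : A →ₐ[ℂ] B) : A → B := fun x => ι x - ι' x

/-- The subspace `J^k` spanned by products `a₀ q(a₁)⋯q(aₘ)` and `q(a₁)⋯q(aₘ)` with
`m ≥ k`, with the convention `J⁰ = A ∗_ℂ A` (the whole algebra). -/
def Jpow {A B : Type*} [Ring A] [Algebra ℂ A] [Ring B] [Algebra ℂ B]
    (ι ι' : A →ₐ[ℂ] B) (k : ℕ) : Submodule ℂ B :=
  if k = 0 then ⊤ else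
    Submodule.span ℂ
      {x | ∃ (a0 : A) (l : List A), k ≤ l.length ∧
        (x = ι a0 * (l.map (qMap ι ι')).prod ∨ x = (l.map (qMap ι ι')).prod)}

/-- If `T` is a `σ`-twisted trace on `J^n` (`n` even), then
`τ(a₀,…,aₙ) := T(q(a₀)⋯q(aₙ))` is `σ`-invariant. -/
theorem twisted_trace_sigma_invariant {A B : Type*} [Ring A] [Algebra ℂ A]
    [Ring B] [Algebra ℂ B] (ι ι' : A →ₐ[ℂ] B)
    (σA : A ≃ₐ[ℂ] A) (σB : B ≃ₐ[ℂ] B)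
    (hσι : ∀ a, σB (ι a) = ι (σA a)) (hσι' : ∀ a, σB (ι' a) = ι' (σA a))
    (n : ℕ) (hn : Even n) (T : B →ₗ[ℂ] ℂ)
    (hT : ∀ (k l : ℕ) (x y : B), k + l = n → x ∈ Jpow ι ι' k → y ∈ Jpow ι ι' l →
      T (x * y) = T (σB y * x))
    (a : ℕ → A) :
    T (((List.range (n + 1)).map fun t => qMap ι ι' (σA (a t))).prod) =
      T (((List.range (n + 1)).map fun t => qMap ι ι' (a t)).prod) := by
  have h1 : (((List.range (n + 1)).map fun t => qMap ι ι' (a t)).prod) ∈ Jpow ι ι' n := by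
    rw [Jpow]
    split
    · exact Submodule.mem_top
    · apply Submodule.subset_span
      refine ⟨1, (List.range (n+1)).map a, by simp, Or.inr ?_⟩
      rw [List.map_map]
      rfl
  have h0 : (1 : B) ∈ Jpow ι ι' 0 := by simp [Jpow]
  have key := hT 0 n 1 _ (by simp) h0 h1
  rw [one_mul, mul_one] at key
  rw [key]
  congr 1
  rw [map_list_prod]
  rw [List.map_map]
  congr 1
  exact List.map_congr_left fun t _ => by
    simp [Function.comp, qMap, map_sub, hσι, hσι']
end

section
/- Under the same hypotheses (T a σ-twisted trace on J^n, n even), the functional τ(a₀,…,aₙ) := T(q(a₀)⋯q(aₙ)) is σ-cyclic: τ(a₀,a₁,…,aₙ) = (−1)ⁿ τ(σ(aₙ), a₀, …, a_{n−1}). -/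
/-- If `T` is a `σ`-twisted trace on `J^n` (`n` even), then
`τ(a₀,…,aₙ) := T(q(a₀)⋯q(aₙ))` is `σ`-cyclic:
`τ(a₀,…,aₙ) = (−1)ⁿ τ(σ(aₙ), a₀,…,a_{n−1})`. -/
theorem twisted_trace_sigma_cyclic {A B : Type*} [Ring A] [Algebra ℂ A]
    [Ring B] [Algebra ℂ B] (ι ι' : A →ₐ[ℂ] B)
    (σA : A ≃ₐ[ℂ] A) (σB : B ≃ₐ[ℂ] B)
    (hσι : ∀ a, σB (ι a) = ι (σA a)) (hσι' : ∀ a, σB (ι' a) = ι' (σA a))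
    (n : ℕ) (hn : Even n) (T : B →ₗ[ℂ] ℂ)
    (hT : ∀ (k l : ℕ) (x y : B), k + l = n → x ∈ Jpow ι ι' k → y ∈ Jpow ι ι' l →
      T (x * y) = T (σB y * x))
    (a : ℕ → A) :
    T (((List.range (n + 1)).map fun t => qMap ι ι' (a t)).prod) =
      (-1 : ℂ) ^ n *
        T (qMap ι ι' (σA (a n)) * ((List.range n).map fun t => qMap ι ι' (a t)).prod) := by
  have hσq : σB (qMap ι ι' (a n)) = qMap ι ι' (σA (a n)) := by
    simp [qMap, map_sub, hσι, hσι']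
  have hx : ((List.range n).map fun t => qMap ι ι' (a t)).prod ∈ Jpow ι ι' n := by
    unfold Jpow
    split
    · exact Submodule.mem_top
    · apply Submodule.subset_span
      exact ⟨1, (List.range n).map a, by simp, Or.inr (by rw [List.map_map]; rfl)⟩
  have key := hT n 0 (((List.range n).map fun t => qMap ι ι' (a t)).prod)
    (qMap ι ι' (a n)) (by simp) hx (by simp [Jpow])
  rw [List.range_succ, List.map_append, List.prod_append]
  simp only [List.map_cons, List.map_nil, List.prod_cons, List.prod_nil, mul_one]
  rw [key, hσq, hn.neg_one_pow, one_mul]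
end

section
/- Let A be a unital algebra with automorphism σ and T a σ-twisted trace on J^n for n even. Then τ(a₀,…,aₙ) := T(q(a₀)⋯q(aₙ)) satisfies the σ-twisted Hochschild cocycle condition: Σ_{k=0}^{n} (−1)^k τ(a₀,…,a_k a_{k+1},…,a_{n+1}) + (−1)^{n+1} τ(σ(a_{n+1}) a₀, a₁,…,aₙ) = 0 for all a₀,…,a_{n+1} ∈ A. -/
/-- Products `q(a_i) q(a_{i+1}) ⋯ q(a_{i+len−1})`. -/
def qProd {A B : Type*} [Ring A] [Algebra ℂ A] [Ring B] [Algebra ℂ B]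
    (ι ι' : A →ₐ[ℂ] B) (a : ℕ → A) (i len : ℕ) : B :=
  ((List.range' i len).map fun t => qMap ι ι' (a t)).prod

/-! Write `U k` for `q(a₀)⋯q(a_{k−1}) ι(a_k) q(a_{k+1})⋯q(a_{n+1})` (`qProdInsert`) and
`Q` for `q(a₀)⋯q(a_{n+1})`. The Leibniz-type identity `q(xy) = ι(x)q(y) + q(x)ι(y) − q(x)q(y)` turns
the `k`-th term of the cocycle sum into `T(U k) + T(U (k+1)) − T(Q)`. For even `n` the alternating sum
of these telescopes to `T(U 0) + T(U (n+1)) − T(Q)`. The twisted term expands the same way, and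
moving the `σ`-twisted first factor to the end with the twisted trace property (one factor in `J^n`,
the other in `J⁰`) gives the same three terms. -/

theorem sum_range_neg_one_pow_mul_add_succ {R : Type*} [CommRing R] (u : ℕ → R) (n : ℕ) :
    ∑ k ∈ Finset.range n, (-1 : R) ^ k * (u k + u (k + 1)) = u 0 - (-1) ^ n * u n := by
  induction n with
  | zero => simp
  | succ n ih =>
    rw [Finset.sum_range_succ, ih, pow_succ]
    ring

theorem sum_range_neg_one_pow_mul_add_succ_sub {R : Type*} [CommRing R] {n : ℕ} (hn : Even n)
    (u : ℕ → R) (c : R) :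
    ∑ k ∈ Finset.range (n + 1), (-1 : R) ^ k * (u k + u (k + 1) - c) = u 0 + u (n + 1) - c := by
  have hodd : Odd (n + 1) := hn.add_one
  simp only [mul_sub, Finset.sum_sub_distrib, ← Finset.sum_mul, sum_range_neg_one_pow_mul_add_succ,
    neg_one_geom_sum, hodd.neg_one_pow, Nat.not_even_iff_odd.mpr hodd, if_false]
  ring

section

variable {A B : Type*} [Ring A] [Algebra ℂ A] [Ring B] [Algebra ℂ B] (ι ι' : A →ₐ[ℂ] B)

theorem qMap_mul (x y : A) :
    qMap ι ι' (x * y) = ι x * qMap ι ι' y + qMap ι ι' x * ι y - qMap ι ι' x * qMap ι ι' y := by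
  simp only [qMap, map_mul]
  noncomm_ring

@[simp]
theorem qProd_zero (a : ℕ → A) (i : ℕ) : qProd ι ι' a i 0 = 1 := rfl

theorem qProd_succ (a : ℕ → A) (i m : ℕ) :
    qProd ι ι' a i (m + 1) = qMap ι ι' (a i) * qProd ι ι' a (i + 1) m := by
  simp [qProd, List.range'_succ]

theorem qProd_succ' (a : ℕ → A) (i m : ℕ) :
    qProd ι ι' a i (m + 1) = qProd ι ι' a i m * qMap ι ι' (a (i + m)) := by
  simp [qProd, List.range'_concat]

theorem qProd_add (a : ℕ → A) (i m l : ℕ) :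
    qProd ι ι' a i (m + l) = qProd ι ι' a i m * qProd ι ι' a (i + m) l := by
  rw [qProd, qProd, qProd, ← List.range'_append_1, List.map_append, List.prod_append]

theorem qProd_mem_Jpow (a : ℕ → A) {i len k : ℕ} (h : k ≤ len) :
    qProd ι ι' a i len ∈ Jpow ι ι' k := by
  unfold Jpow
  split_ifs
  · exact Submodule.mem_top
  · refine Submodule.subset_span ⟨1, (List.range' i len).map a, by simpa using h, Or.inr ?_⟩
    simp [qProd, Function.comp_def]

theorem ι_mul_qProd_mem_Jpow (a : ℕ → A) (a₀ : A) {i len k : ℕ} (h : k ≤ len) :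
    ι a₀ * qProd ι ι' a i len ∈ Jpow ι ι' k := by
  unfold Jpow
  split_ifs
  · exact Submodule.mem_top
  · refine Submodule.subset_span ⟨a₀, (List.range' i len).map a, by simpa using h, Or.inl ?_⟩
    simp [qProd, Function.comp_def]

theorem mem_Jpow_zero (x : B) : x ∈ Jpow ι ι' 0 := by
  simp [Jpow]

def qProdInsert (a : ℕ → A) (k m : ℕ) : B :=
  qProd ι ι' a 0 k * ι (a k) * qProd ι ι' a (k + 1) m

theorem qProd_mul_qMap_mul_mul_qProd (a : ℕ → A) (k m : ℕ) :
    qProd ι ι' a 0 k * qMap ι ι' (a k * a (k + 1)) * qProd ι ι' a (k + 2) m =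
      qProdInsert ι ι' a k (m + 1) + qProdInsert ι ι' a (k + 1) m - qProd ι ι' a 0 (k + 2 + m) := by
  rw [qProdInsert, qProdInsert, qMap_mul, qProd_succ ι ι' a (k + 1) m, qProd_add ι ι' a 0 (k + 2) m,
    qProd_succ' ι ι' a 0 (k + 1), qProd_succ' ι ι' a 0 k]
  simp only [zero_add]
  noncomm_ring

theorem apply_qMap_twist_mul_qProd_eq (σA : A ≃ₐ[ℂ] A) (σB : B ≃ₐ[ℂ] B)
    (hσι : ∀ a, σB (ι a) = ι (σA a)) (hσι' : ∀ a, σB (ι' a) = ι' (σA a))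
    {n : ℕ} (T : B →ₗ[ℂ] ℂ) (hT : ∀ x y, x ∈ Jpow ι ι' n → T (x * y) = T (σB y * x))
    (a : ℕ → A) :
    T (qMap ι ι' (σA (a (n + 1)) * a 0) * qProd ι ι' a 1 n) =
      T (qProdInsert ι ι' a (n + 1) 0) + T (qProdInsert ι ι' a 0 (n + 1)) -
        T (qProd ι ι' a 0 (n + 2)) := by
  set b := a (n + 1)
  have hq : qMap ι ι' (a 0) * qProd ι ι' a 1 n = qProd ι ι' a 0 (n + 1) :=
    (qProd_succ ι ι' a 0 n).symm
  have hσq : σB (qMap ι ι' b) = qMap ι ι' (σA b) := by simp [qMap, hσι, hσι']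
  have hQ : qProd ι ι' a 0 (n + 1) ∈ Jpow ι ι' n := qProd_mem_Jpow ι ι' a n.le_succ
  have hιQ : ι (a 0) * qProd ι ι' a 1 n ∈ Jpow ι ι' n := ι_mul_qProd_mem_Jpow ι ι' a _ le_rfl
  calc T (qMap ι ι' (σA b * a 0) * qProd ι ι' a 1 n)
      = T (σB (ι b) * qProd ι ι' a 0 (n + 1)) +
          T (σB (qMap ι ι' b) * (ι (a 0) * qProd ι ι' a 1 n)) -
          T (σB (qMap ι ι' b) * qProd ι ι' a 0 (n + 1)) := by
        rw [qMap_mul, hσι, hσq, ← hq]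
        simp only [add_mul, sub_mul, mul_assoc, map_add, map_sub]
    _ = T (qProd ι ι' a 0 (n + 1) * ι b) + T (ι (a 0) * qProd ι ι' a 1 n * qMap ι ι' b) -
          T (qProd ι ι' a 0 (n + 1) * qMap ι ι' b) := by
        rw [hT _ _ hQ, hT _ _ hιQ, hT _ _ hQ]
    _ = _ := by
        simp [qProdInsert, qProd_succ', mul_assoc, Nat.add_comm 1 n, b]

end

/-- If `T` is a `σ`-twisted trace on `J^n` (`n` even), then
`τ(a₀,…,aₙ) := T(q(a₀)⋯q(aₙ))` satisfies the `σ`-twisted Hochschild cocycle condition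
`Σ_{k=0}^{n} (−1)^k τ(a₀,…,a_k a_{k+1},…,a_{n+1})
  + (−1)^{n+1} τ(σ(a_{n+1}) a₀, a₁,…,aₙ) = 0`. -/
theorem twisted_trace_hochschild_cocycle {A B : Type*} [Ring A] [Algebra ℂ A]
    [Ring B] [Algebra ℂ B] (ι ι' : A →ₐ[ℂ] B)
    (σA : A ≃ₐ[ℂ] A) (σB : B ≃ₐ[ℂ] B)
    (hσι : ∀ a, σB (ι a) = ι (σA a)) (hσι' : ∀ a, σB (ι' a) = ι' (σA a))
    (n : ℕ) (hn : Even n) (T : B →ₗ[ℂ] ℂ)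
    (hT : ∀ (k l : ℕ) (x y : B), k + l = n → x ∈ Jpow ι ι' k → y ∈ Jpow ι ι' l →
      T (x * y) = T (σB y * x))
    (a : ℕ → A) :
    (∑ k ∈ Finset.range (n + 1), (-1 : ℂ) ^ k *
        T (qProd ι ι' a 0 k * qMap ι ι' (a k * a (k + 1)) * qProd ι ι' a (k + 2) (n - k))) +
      (-1 : ℂ) ^ (n + 1) *
        T (qMap ι ι' (σA (a (n + 1)) * a 0) * qProd ι ι' a 1 n) = 0 := by
  set U : ℕ → ℂ := fun k => T (qProdInsert ι ι' a k (n + 1 - k))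
  have hsummand : ∀ k ∈ Finset.range (n + 1),
      T (qProd ι ι' a 0 k * qMap ι ι' (a k * a (k + 1)) * qProd ι ι' a (k + 2) (n - k)) =
        U k + U (k + 1) - T (qProd ι ι' a 0 (n + 2)) := by
    intro k hk
    have hkn : k ≤ n := Nat.lt_succ_iff.mp (Finset.mem_range.mp hk)
    rw [qProd_mul_qMap_mul_mul_qProd, map_sub, map_add]
    have e₁ : k + 2 + (n - k) = n + 2 := by omega
    have e₂ : n - k + 1 = n + 1 - k := by omega
    have e₃ : n - k = n + 1 - (k + 1) := by omega
    rw [e₁, e₂, e₃]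
  have htwist := apply_qMap_twist_mul_qProd_eq ι ι' σA σB hσι hσι' T
    (fun x y hx => hT n 0 x y n.add_zero hx (mem_Jpow_zero ι ι' y)) a
  rw [Finset.sum_congr rfl fun k hk => congrArg _ (hsummand k hk),
    sum_range_neg_one_pow_mul_add_succ_sub hn, htwist, hn.add_one.neg_one_pow]
  simp only [U, Nat.sub_zero, Nat.sub_self]
  ring
end

section
/- For 0 < q < 1 and 0 < s ≤ 1, the following identity holds: −(1/2)·(2q/(1+s²)²)·( Σ_{k=0}^∞ [ 2s²(q⁴−1)q^{4k} + 2s(a_{k+1} − a_k) + (q²−1)(1−s²)²q^{2k} + 2s(b_k − b_{k+1}) ] ) = q, where a_k = √(s²+q^{2k})√(1+s²q^{2k})q^{2k} and b_k = √(s²+q^{2k})√(1+s²q^{2k}). -/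
/-!
Put `x_k = q ^ (2k)` and `b = podlesWeight s`, so that the `b_k` and `a_k` of the statement are
`b(x_k)` and `b(x_k) x_k`. Every summand is then a combination of differences
`c(r^k) - c(r^(k+1))` of functions `c` monotone and continuous on `[0, ∞)`: `c = id` with
`r = q⁴` and `r = q²` for the geometric parts, `c = b` and `c = x ↦ b(x) x` with `r = q²` for
the others. Such a series of nonnegative differences sums to `c 1 - c 0`, and since
`b 1 = 1 + s²` and `b 0 = s` the whole series sums to `-(1 + s²)²`.
-/

open Filter Topology Set

theorem Antitone.hasSum_sub_succ {c : ℕ → ℝ} {L : ℝ} (hc : Antitone c)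
    (hL : Tendsto c atTop (𝓝 L)) : HasSum (fun k => c k - c (k + 1)) (c 0 - L) := by
  rw [hasSum_iff_tendsto_nat_of_nonneg fun k => sub_nonneg.2 (hc k.le_succ)]
  simp_rw [Finset.sum_range_sub' c]
  exact tendsto_const_nhds.sub hL

theorem MonotoneOn.hasSum_comp_pow_sub_comp_pow_succ {g : ℝ → ℝ} {r : ℝ}
    (hg : MonotoneOn g (Ici 0)) (hg0 : ContinuousAt g 0) (h₀ : 0 ≤ r) (h₁ : r < 1) :
    HasSum (fun k : ℕ => g (r ^ k) - g (r ^ (k + 1))) (g 1 - g 0) := by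
  simpa using Antitone.hasSum_sub_succ
    (fun _ _ hkl => hg (pow_nonneg h₀ _) (pow_nonneg h₀ _) (pow_right_anti₀ h₀ h₁.le hkl))
    (hg0.tendsto.comp (tendsto_pow_atTop_nhds_zero_of_lt_one h₀ h₁))

noncomputable def podlesWeight (s x : ℝ) : ℝ := √(s ^ 2 + x) * √(1 + s ^ 2 * x)

theorem podlesWeight_zero {s : ℝ} (hs : 0 ≤ s) : podlesWeight s 0 = s := by
  simp [podlesWeight, Real.sqrt_sq hs]

theorem podlesWeight_one (s : ℝ) : podlesWeight s 1 = 1 + s ^ 2 := by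
  rw [podlesWeight, mul_one, add_comm, Real.mul_self_sqrt (by positivity)]

theorem continuous_podlesWeight (s : ℝ) : Continuous (podlesWeight s) := by
  unfold podlesWeight
  fun_prop

theorem monotoneOn_podlesWeight (s : ℝ) : MonotoneOn (podlesWeight s) (Ici 0) :=
  fun _ _ _ _ hxy => mul_le_mul (Real.sqrt_le_sqrt (by linarith))
    (Real.sqrt_le_sqrt (by gcongr)) (Real.sqrt_nonneg _) (Real.sqrt_nonneg _)

theorem monotoneOn_podlesWeight_mul_id (s : ℝ) :
    MonotoneOn (fun x => podlesWeight s x * x) (Ici 0) :=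
  fun _ hx _ _ hxy => mul_le_mul (monotoneOn_podlesWeight s hx (hx.trans hxy) hxy) hxy hx
    (by unfold podlesWeight; positivity)

theorem podles_chern_pairing_general (s q : ℝ) (hs0 : 0 < s)
    (hq0 : 0 < q) (hq1 : q < 1) :
    -(1 / 2) * (2 * q / (1 + s ^ 2) ^ 2) *
        (∑' k : ℕ,
          (2 * s ^ 2 * (q ^ 4 - 1) * q ^ (4 * k) +
            2 * s *
              ((Real.sqrt (s ^ 2 + q ^ (2 * (k + 1))) *
                  Real.sqrt (1 + s ^ 2 * q ^ (2 * (k + 1))) * q ^ (2 * (k + 1))) -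
                (Real.sqrt (s ^ 2 + q ^ (2 * k)) * Real.sqrt (1 + s ^ 2 * q ^ (2 * k)) *
                  q ^ (2 * k))) +
            (q ^ 2 - 1) * (1 - s ^ 2) ^ 2 * q ^ (2 * k) +
            2 * s *
              ((Real.sqrt (s ^ 2 + q ^ (2 * k)) * Real.sqrt (1 + s ^ 2 * q ^ (2 * k))) -
                (Real.sqrt (s ^ 2 + q ^ (2 * (k + 1))) *
                  Real.sqrt (1 + s ^ 2 * q ^ (2 * (k + 1))))))) = q := by
  have hq2 : q ^ 2 < 1 := pow_lt_one₀ hq0.le hq1 two_ne_zero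
  have hq4 : q ^ 4 < 1 := pow_lt_one₀ hq0.le hq1 four_ne_zero
  have h4k := (monotoneOn_id.hasSum_comp_pow_sub_comp_pow_succ continuousAt_id
    (by positivity) hq4).mul_left (-(2 * s ^ 2))
  have h2k := (monotoneOn_id.hasSum_comp_pow_sub_comp_pow_succ continuousAt_id
    (by positivity) hq2).mul_left (-(1 - s ^ 2) ^ 2)
  have ha := ((monotoneOn_podlesWeight_mul_id s).hasSum_comp_pow_sub_comp_pow_succ
    ((continuous_podlesWeight s).mul continuous_id).continuousAt (by positivity) hq2).mul_left
      (-(2 * s))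
  have hb := ((monotoneOn_podlesWeight s).hasSum_comp_pow_sub_comp_pow_succ
    (continuous_podlesWeight s).continuousAt (by positivity) hq2).mul_left (2 * s)
  calc _ = -(1 / 2) * (2 * q / (1 + s ^ 2) ^ 2) * -(1 + s ^ 2) ^ 2 := by
        congr 1
        refine (tsum_congr fun k => ?_).trans (((h4k.add ha).add h2k).add hb).tsum_eq |>.trans ?_
        · simp only [podlesWeight, id, ← pow_mul]
          ring
        · simp only [podlesWeight_one, podlesWeight_zero hs0.le, id]
          ring
    _ = q := by
        field_simp

/-- The Chern character pairing computation `Ch₂(P,P,P) = q` for the Podleś sphere. -/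
theorem podles_chern_pairing (s q : ℝ) (hs0 : 0 < s) (hs1 : s ≤ 1)
    (hq0 : 0 < q) (hq1 : q < 1) :
    -(1 / 2) * (2 * q / (1 + s ^ 2) ^ 2) *
        (∑' k : ℕ,
          (2 * s ^ 2 * (q ^ 4 - 1) * q ^ (4 * k) +
            2 * s *
              ((Real.sqrt (s ^ 2 + q ^ (2 * (k + 1))) *
                  Real.sqrt (1 + s ^ 2 * q ^ (2 * (k + 1))) * q ^ (2 * (k + 1))) -
                (Real.sqrt (s ^ 2 + q ^ (2 * k)) * Real.sqrt (1 + s ^ 2 * q ^ (2 * k)) *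
                  q ^ (2 * k))) +
            (q ^ 2 - 1) * (1 - s ^ 2) ^ 2 * q ^ (2 * k) +
            2 * s *
              ((Real.sqrt (s ^ 2 + q ^ (2 * k)) * Real.sqrt (1 + s ^ 2 * q ^ (2 * k))) -
                (Real.sqrt (s ^ 2 + q ^ (2 * (k + 1))) *
                  Real.sqrt (1 + s ^ 2 * q ^ (2 * (k + 1))))))) = q :=
  podles_chern_pairing_general s q hs0 hq0 hq1
end

section
/- The matrix P = (1/(1+s²))·[[1 − q²A, B],[B*, A + s²]] with entries in the Podleś sphere algebra A(S²_{q,s}) satisfies P² = P and P* = P. -/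
open Matrix in
/-- The matrix `P = (1/(1+s²))·[[1 − q²A, B],[B*, A + s²]]` over the Podleś sphere
algebra `A(S²_{q,s})` (formalized over any unital star ℂ-algebra whose elements
`A = A*, B, B*` satisfy the defining relations) is a self-adjoint idempotent. -/
theorem podles_projection (q s : ℝ) (hq0 : 0 < q) (hq1 : q < 1)
    (hs0 : 0 < s) (hs1 : s ≤ 1)
    {R : Type*} [Ring R] [Algebra ℂ R] [StarRing R] [StarModule ℂ R]
    (A B : R) (hA : star A = A)
    (h1 : star B * B = (1 - A) * (A + (s : ℂ) ^ 2 • (1 : R)))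
    (h2 : B * star B = (1 - (q : ℂ) ^ 2 • A) * ((q : ℂ) ^ 2 • A + (s : ℂ) ^ 2 • (1 : R)))
    (h3 : B * A = (q : ℂ) ^ 2 • (A * B))
    (h4 : A * star B = (q : ℂ) ^ 2 • (star B * A))
    (P : Matrix (Fin 2) (Fin 2) R)
    (hP : P = ((1 + (s : ℂ) ^ 2)⁻¹ : ℂ) •
      !![1 - (q : ℂ) ^ 2 • A, B; star B, A + (s : ℂ) ^ 2 • (1 : R)]) :
    P * P = P ∧ star P = P := by
  set qc : ℂ := (q : ℂ) ^ 2 with hqc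
  set sc : ℂ := (s : ℂ) ^ 2 with hsc
  have hne : (1 + sc) ≠ 0 := by
    have : (1 + sc) = ((1 + s ^ 2 : ℝ) : ℂ) := by push_cast [hsc]; ring
    rw [this]
    exact_mod_cast ne_of_gt (by positivity : (0:ℝ) < 1 + s ^ 2)
  have key00 : (1 - qc • A) * (1 - qc • A) + B * star B = (1 + sc) • (1 - qc • A) := by
    rw [h2, ← mul_add]
    have : (1 - qc • A) + (qc • A + sc • (1 : R)) = (1 + sc) • (1 : R) := by
      simp [add_smul]; abel
    rw [this, mul_smul_comm, mul_one]
  have key11 : star B * B + (A + sc • (1 : R)) * (A + sc • (1 : R))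
      = (1 + sc) • (A + sc • (1 : R)) := by
    rw [h1, ← add_mul]
    have : (1 - A) + (A + sc • (1 : R)) = (1 + sc) • (1 : R) := by
      simp [add_smul]; abel
    rw [this, smul_mul_assoc, one_mul]
  have key01 : (1 - qc • A) * B + B * (A + sc • (1 : R)) = (1 + sc) • B := by
    rw [mul_add, h3, sub_mul, one_mul, smul_mul_assoc, mul_smul_comm, mul_one, add_smul,
      one_smul]
    abel
  have key10 : star B * (1 - qc • A) + (A + sc • (1 : R)) * star B = (1 + sc) • star B := by
    rw [mul_sub, mul_one, add_mul, h4, mul_smul_comm, smul_mul_assoc, one_mul, add_smul,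
      one_smul]
    abel
  have hM : (!![1 - qc • A, B; star B, A + sc • (1 : R)] :
      Matrix (Fin 2) (Fin 2) R) * !![1 - qc • A, B; star B, A + sc • (1 : R)]
      = (1 + sc) • !![1 - qc • A, B; star B, A + sc • (1 : R)] := by
    ext i j
    fin_cases i <;> fin_cases j <;>
      simp [Matrix.mul_apply, Fin.sum_univ_two, key00, key01, key10, key11]
  constructor
  · rw [hP, Matrix.smul_mul, Matrix.mul_smul, smul_smul, hM, smul_smul]
    congr 1
    field_simp
  · rw [hP, star_smul]
    have hc : star ((1 + sc)⁻¹ : ℂ) = (1 + sc)⁻¹ := by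
      simp [hsc, Complex.star_def, ← Complex.ofReal_pow]
    rw [hc]
    congr 1
    ext i j
    fin_cases i <;> fin_cases j <;>
      simp [Matrix.conjTranspose_apply, hA, star_smul, hqc, hsc,
        ← Complex.ofReal_pow, Complex.star_def]
end
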